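/- The NADS (Σ, g_{1,∞}) is finitely generated but not periodic, is topologically transitive (in fact topologically mixing), has dense set of periodic points (Per(g_{1,∞}) dense in Σ), and admits two invariant periodic points x, y ∈ Σ with orb(x, g_{1,∞}) ∩ orb(y, g_{1,∞}) = ∅; i.e., it satisfies all the hypotheses of the Banks-type theorem for NADS while not being periodic. -/
import Mathlib


/-- The symbolic space `Σ = {0,1}^ℕ`; here `x : BinSeq` is 0-indexed, so `x n`
represents the symbol `x_{n+1}` of the paper. -/
abbrev BinSeq : Type := ℕ → Bool

/-- The shift map `σ(x₁x₂x₃⋯) = x₂x₃⋯`. -/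
def shift (x : BinSeq) : BinSeq := fun n => x (n + 1)

/-- The metric `d(x,y) = Σ_{n≥1} |x_n − y_n| / 2^n` on `Σ` (with our 0-indexing, symbol `n`
contributes `1/2^{n+1}`). -/
noncomputable def dS (x y : BinSeq) : ℝ :=
  ∑' n : ℕ, (if x n = y n then (0 : ℝ) else 1) / 2 ^ (n + 1)

/-- `tm n` is the Thue–Morse symbol `ξ_{n+1}`: the parity of the number of ones in the
binary expansion of `n` (i.e. of `(n+1) − 1`); `true` encodes `1` and `false` encodes `0`. -/
def tm (n : ℕ) : Bool := (Nat.digits 2 n).sum % 2 == 1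

/-- `g i` is the map `g_{i+1}` of the NADS: `σ` if `ξ_{i+1} = 0` and `σ²` if `ξ_{i+1} = 1`. -/
def g (i : ℕ) : BinSeq → BinSeq := if tm i then shift ∘ shift else shift

/-- `gComp n = g_1^{(n)} = g_n ∘ g_{n-1} ∘ ⋯ ∘ g_1`. -/
def gComp : ℕ → BinSeq → BinSeq
  | 0 => id
  | n + 1 => g n ∘ gComp n

/-- A set `U ⊆ Σ` is open for the metric `d`. -/
def IsOpenS (U : Set BinSeq) : Prop :=
  ∀ x ∈ U, ∃ ε : ℝ, 0 < ε ∧ ∀ y : BinSeq, dS x y < ε → y ∈ U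

/-- `x` is a periodic point of the NADS `g_{1,∞}`: there is `n ≥ 1` with
`g_1^{(nk)}(x) = x` for all `k ≥ 0`. -/
def IsGPeriodicPt (x : BinSeq) : Prop :=
  ∃ n : ℕ, 1 ≤ n ∧ ∀ k : ℕ, gComp (n * k) x = x

/-- The orbit `orb(x, g_{1,∞}) = {g_1^{(n)}(x) : n ≥ 0}`. -/
def gOrbit (x : BinSeq) : Set BinSeq :=
  Set.range fun n : ℕ => gComp n x

-- auxiliary
lemma tm_two_mul (n : ℕ) : tm (2 * n) = tm n := by
  rcases Nat.eq_zero_or_pos n with h | h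
  · simp [h]
  · unfold tm
    rw [Nat.digits_def' (by norm_num : 1 < 2) (by omega)]
    have h1 : 2 * n % 2 = 0 := by omega
    have h2 : 2 * n / 2 = n := by omega
    rw [h1, h2]
    simp

lemma tm_two_mul_add_one (n : ℕ) : tm (2 * n + 1) = !tm n := by
  unfold tm
  rw [Nat.digits_def' (by norm_num : 1 < 2) (by omega)]
  have h1 : (2 * n + 1) % 2 = 1 := by omega
  have h2 : (2 * n + 1) / 2 = n := by omega
  rw [h1, h2]
  rcases Nat.mod_two_eq_zero_or_one ((Nat.digits 2 n).sum) with h | h <;>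
    simp [List.sum_cons, Nat.add_mod, h]

lemma tm_not_per : ∀ p, 1 ≤ p → ∃ n, tm (n + p) ≠ tm n := by
  intro p
  induction p using Nat.strong_induction_on with
  | _ p ih =>
    intro hp
    rcases Nat.even_or_odd p with ⟨q, hq⟩ | ⟨q, hq⟩
    · obtain ⟨n, hn⟩ := ih q (by omega) (by omega)
      refine ⟨2 * n, ?_⟩
      rw [show 2 * n + p = 2 * (n + q) by omega, tm_two_mul, tm_two_mul]
      exact hn
    · by_contra h
      push_neg at h
      -- h : ∀ n, tm (n + p) = tm n,  p = 2q+1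
      have h1 : ∀ m, tm (m + q) = !tm m := by
        intro m
        have := h (2 * m)
        rw [show 2 * m + p = 2 * (m + q) + 1 by omega, tm_two_mul_add_one,
          tm_two_mul] at this
        cases hb : tm m <;> cases hb2 : tm (m + q) <;> simp_all
      have h2 : ∀ m, tm (m + q + 1) = tm (m + q) := by
        intro m
        have := h (2 * m + 1)
        rw [show 2 * m + 1 + p = 2 * (m + q + 1) by omega, tm_two_mul,
          tm_two_mul_add_one] at this
        rw [this, h1]
      have h3 : ∀ j, tm (q + j) = tm q := by
        intro j
        induction j with
        | zero => rfl
        | succ j ihj =>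
          have := h2 (j)
          rw [show q + (j + 1) = j + q + 1 by omega, this,
            show j + q = q + j by omega, ihj]
      have e1 : tm (2 * q + 1) = !tm q := tm_two_mul_add_one q
      have e2 : tm (2 * q + 1) = tm q := by
        rw [show 2 * q + 1 = q + (q + 1) by omega]; exact h3 (q + 1)
      rw [e1] at e2
      cases hb : tm q <;> simp_all

lemma shift_ne : shift ≠ shift ∘ shift := by
  intro h
  have := congrFun (congrFun h (fun n => decide (n = 1))) 0
  simp [shift] at this

def cnt : ℕ → ℕ
  | 0 => 0
  | n + 1 => cnt n + (if tm n then 2 else 1)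

lemma le_cnt (n : ℕ) : n ≤ cnt n := by
  induction n with
  | zero => simp [cnt]
  | succ n ih => by_cases h : tm n <;> simp [cnt, h] <;> omega

lemma gComp_apply (n : ℕ) (x : BinSeq) (j : ℕ) : gComp n x j = x (j + cnt n) := by
  induction n generalizing j with
  | zero => rfl
  | succ n ih =>
    show g n (gComp n x) j = x (j + cnt (n + 1))
    unfold g
    by_cases h : tm n
    · rw [if_pos h]
      show gComp n x (j + 1 + 1) = _
      rw [ih]
      congr 1
      simp [cnt, h]; omega
    · rw [if_neg h]
      show gComp n x (j + 1) = _
      rw [ih]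
      congr 1
      simp [cnt, h]; omega

lemma cnt_succ (n : ℕ) : cnt (n + 1) = cnt n + (if tm n then 2 else 1) := rfl

lemma cnt_two_mul (k : ℕ) : cnt (2 * k) = 3 * k := by
  induction k with
  | zero => rfl
  | succ k ih =>
    rw [show 2 * (k + 1) = (2 * k + 1) + 1 by omega, cnt_succ, cnt_succ,
      tm_two_mul, tm_two_mul_add_one, ih]
    cases h : tm k <;> simp <;> omega

-- distances
lemma dS_summable (x y : BinSeq) :
    Summable (fun n => (if x n = y n then (0 : ℝ) else 1) / 2 ^ (n + 1)) := by
  refine Summable.of_nonneg_of_le (f := fun n => (1 / 2 : ℝ) ^ n)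
    (fun n => by positivity) ?_
    (summable_geometric_of_lt_one (by norm_num) (by norm_num))
  intro n
  rcases eq_or_ne (x n) (y n) with h | h
  · simp [h]
  · rw [if_neg h]
    show (1:ℝ) / 2 ^ (n + 1) ≤ (1 / 2) ^ n
    rw [div_pow, one_pow, div_le_div_iff₀ (by positivity) (by positivity)]
    have : (2:ℝ) ^ n ≤ 2 ^ (n + 1) := by
      apply pow_le_pow_right₀ (by norm_num); omega
    linarith

lemma dS_le_of_agree (x y : BinSeq) (m : ℕ) (hagree : ∀ n < m, x n = y n) :
    dS x y ≤ (1 / 2 : ℝ) ^ m := by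
  set f : ℕ → ℝ := fun n => (if x n = y n then (0 : ℝ) else 1) / 2 ^ (n + 1) with hf
  have hsum := dS_summable x y
  have key := Summable.sum_add_tsum_nat_add (f := f) m hsum
  have hz : ∑ i ∈ Finset.range m, f i = 0 := by
    apply Finset.sum_eq_zero
    intro i hi
    simp only [hf, hagree i (Finset.mem_range.mp hi), if_pos]
    simp
  have hle : ∑' n, f (n + m) ≤ ∑' n : ℕ, (1 / 2 : ℝ) ^ m * (1 / 2) ^ (n + 1) := by
    apply Summable.tsum_le_tsum
    · intro n
      rcases eq_or_ne (x (n + m)) (y (n + m)) with h | h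
      · simp [hf, h]
      · simp only [hf, if_neg h]
        rw [← pow_add, div_pow, one_pow]
        rw [div_le_div_iff₀ (by positivity) (by positivity)]
        have : (2:ℝ) ^ (m + (n + 1)) ≤ 2 ^ (n + m + 1) := by
          apply pow_le_pow_right₀ (by norm_num); omega
        linarith
    · exact (summable_nat_add_iff m).mpr hsum
    · apply Summable.mul_left
      exact ((summable_geometric_of_lt_one (by norm_num) (by norm_num)).comp_injective
        (add_left_injective 1))
  have hgeo : ∑' n : ℕ, (1 / 2 : ℝ) ^ m * (1 / 2) ^ (n + 1) = (1 / 2) ^ m := by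
    rw [tsum_mul_left]
    have : ∑' n : ℕ, (1 / 2 : ℝ) ^ (n + 1) = 1 := by
      have h2 : ∑' n : ℕ, (1 / 2 : ℝ) ^ n = 2 := by
        rw [tsum_geometric_of_lt_one (by norm_num) (by norm_num)]; norm_num
      have := Summable.sum_add_tsum_nat_add (f := fun n : ℕ => (1 / 2 : ℝ) ^ n) 1
        (summable_geometric_of_lt_one (by norm_num) (by norm_num))
      simp only [Finset.range_one, Finset.sum_singleton, pow_zero] at this
      rw [h2] at this
      linarith
    rw [this, mul_one]
  calc dS x y = ∑' n, f n := rfl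
    _ = ∑ i ∈ Finset.range m, f i + ∑' n, f (n + m) := key.symm
    _ = ∑' n, f (n + m) := by rw [hz, zero_add]
    _ ≤ (1 / 2) ^ m := by rw [← hgeo]; exact hle

lemma gNads_mixing : ∀ U V : Set BinSeq, IsOpenS U → IsOpenS V → U.Nonempty → V.Nonempty →
    ∃ N : ℕ, ∀ n : ℕ, N ≤ n → (gComp n '' U ∩ V).Nonempty := by
  rintro U V hU hV ⟨x, hx⟩ ⟨v, hv⟩
  obtain ⟨ε, hε, hball⟩ := hU x hx
  obtain ⟨m, hm⟩ := exists_pow_lt_of_lt_one hε (by norm_num : (1 / 2 : ℝ) < 1)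
  refine ⟨m, fun n hn => ?_⟩
  have hcm : m ≤ cnt n := le_trans hn (le_cnt n)
  set y : BinSeq := fun j => if j < cnt n then x j else v (j - cnt n) with hy
  have hyU : y ∈ U := by
    apply hball
    refine lt_of_le_of_lt (dS_le_of_agree x y m fun j hj => ?_) hm
    simp [hy, if_pos (lt_of_lt_of_le hj hcm)]
  have hgy : gComp n y = v := by
    funext j
    rw [gComp_apply]
    have h1 : ¬ (j + cnt n < cnt n) := by omega
    simp only [hy, if_neg h1]
    congr 1
    omega
  exact ⟨v, ⟨y, hyU, hgy⟩, hv⟩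


/-- The NADS `(Σ, g_{1,∞})` is finitely generated but not periodic, topologically
transitive (in fact topologically mixing), has dense periodic points, and admits two
invariant periodic points with disjoint orbits — i.e. it satisfies all the hypotheses of
the Banks-type theorem for NADS while not being periodic. -/
theorem gNads_answers_open_problem :
    {h : BinSeq → BinSeq | ∃ i : ℕ, g i = h}.Finite ∧
    (¬ ∃ p : ℕ, 1 ≤ p ∧ ∀ i : ℕ, g (i + p) = g i) ∧
    (∀ U V : Set BinSeq, IsOpenS U → IsOpenS V → U.Nonempty → V.Nonempty →
      ∃ n : ℕ, (gComp n '' U ∩ V).Nonempty) ∧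
    (∀ U V : Set BinSeq, IsOpenS U → IsOpenS V → U.Nonempty → V.Nonempty →
      ∃ N : ℕ, ∀ n : ℕ, N ≤ n → (gComp n '' U ∩ V).Nonempty) ∧
    (∀ x : BinSeq, ∀ δ : ℝ, 0 < δ → ∃ η : BinSeq, IsGPeriodicPt η ∧ dS x η < δ) ∧
    (∃ x y : BinSeq, IsGPeriodicPt x ∧ IsGPeriodicPt y ∧
      (∀ i : ℕ, g i '' gOrbit x ⊆ gOrbit x) ∧
      (∀ i : ℕ, g i '' gOrbit y ⊆ gOrbit y) ∧
      gOrbit x ∩ gOrbit y = ∅) := by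
  refine ⟨?_, ?_, ?_, gNads_mixing, ?_, ?_⟩
  · -- finitely generated
    refine Set.Finite.subset ((Set.finite_singleton (shift ∘ shift)).insert shift) ?_
    rintro h ⟨i, rfl⟩
    by_cases ht : tm i <;> simp [g, ht]
  · -- not periodic
    rintro ⟨p, hp, hper⟩
    obtain ⟨n, hn⟩ := tm_not_per p hp
    have hgn := hper n
    cases h1 : tm (n + p) <;> cases h2 : tm n
    · exact hn (h1.trans h2.symm)
    · simp only [g, h1, h2, if_false, if_true] at hgn
      exact shift_ne hgn
    · simp only [g, h1, h2, if_false, if_true] at hgn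
      exact shift_ne hgn.symm
    · exact hn (h1.trans h2.symm)
  · -- transitive
    intro U V hU hV hUne hVne
    obtain ⟨N, hN⟩ := gNads_mixing U V hU hV hUne hVne
    exact ⟨N, hN N le_rfl⟩
  · -- dense periodic points
    intro x δ hδ
    obtain ⟨m, hm⟩ := exists_pow_lt_of_lt_one hδ (by norm_num : (1 / 2 : ℝ) < 1)
    refine ⟨fun j => x (j % (3 * (m + 1))), ⟨2 * (m + 1), by omega, fun k => ?_⟩, ?_⟩
    · funext j
      rw [gComp_apply, show 2 * (m + 1) * k = 2 * ((m + 1) * k) by ring, cnt_two_mul]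
      show x ((j + 3 * ((m + 1) * k)) % (3 * (m + 1))) = x (j % (3 * (m + 1)))
      congr 1
      rw [show 3 * ((m + 1) * k) = (3 * (m + 1)) * k by ring, Nat.add_mul_mod_self_left]
    · refine lt_of_le_of_lt (dS_le_of_agree x _ m fun j hj => ?_) hm
      show x j = x (j % (3 * (m + 1)))
      rw [Nat.mod_eq_of_lt (by omega)]
  · -- invariant periodic points with disjoint orbits
    have hcF : ∀ n, gComp n (fun _ => false) = (fun _ => false) :=
      fun n => funext fun j => by rw [gComp_apply]
    have hcT : ∀ n, gComp n (fun _ => true) = (fun _ => true) :=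
      fun n => funext fun j => by rw [gComp_apply]
    have horbF : gOrbit (fun _ => false) = {fun _ => false} := by
      ext z; simp [gOrbit, hcF, eq_comm]
    have horbT : gOrbit (fun _ => true) = {fun _ => true} := by
      ext z; simp [gOrbit, hcT, eq_comm]
    have hgF : ∀ i, g i (fun _ => false) = (fun _ => false) := by
      intro i; unfold g; split <;> rfl
    have hgT : ∀ i, g i (fun _ => true) = (fun _ => true) := by
      intro i; unfold g; split <;> rfl
    refine ⟨fun _ => false, fun _ => true,
      ⟨1, le_rfl, fun k => hcF _⟩, ⟨1, le_rfl, fun k => hcT _⟩, ?_, ?_, ?_⟩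
    · intro i
      rw [horbF]
      rintro z ⟨w, hw, rfl⟩
      rw [Set.mem_singleton_iff] at hw
      rw [hw, hgF]
      rfl
    · intro i
      rw [horbT]
      rintro z ⟨w, hw, rfl⟩
      rw [Set.mem_singleton_iff] at hw
      rw [hw, hgT]
      rfl
    · rw [horbF, horbT]
      apply Set.eq_empty_iff_forall_notMem.mpr
      rintro z ⟨hz1, hz2⟩
      rw [Set.mem_singleton_iff] at hz1 hz2
      have := congrFun (hz1.symm.trans hz2) 0
      simp at this
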